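/- Let H be a Hermitian N×N complex matrix, let U be a unitary matrix such that U H U† is diagonal, and let F be a complex Hadamard matrix of order N. Then for every unitary matrix V of order N, the sum over all off-diagonal positions (i,j), i ≠ j, of |(V H V†)_{ij}|² is at most the corresponding off-diagonal sum for ((F U) H (F U)†); that is, the maximum of the squared off-diagonal Hilbert–Schmidt weight over the unitary orbit of H is attained at V = F U. -/

import Mathlib

/-!
Conjugation by a unitary preserves the total weight `∑ i j, |G i j|²` and the trace, so
maximising the off-diagonal weight over the orbit means minimising the diagonal weight
`∑ i, |G i i|²` under the constraint `∑ i, G i i = tr H`. By Cauchy–Schwarz this is at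
least `|tr H|² / N`, with equality for a constant diagonal; conjugating the diagonal matrix
`U H Uᴴ` by a matrix whose entries all have modulus `1/√N` produces exactly that diagonal.
-/

open Matrix Finset

theorem Finset.sum_offDiag_univ_eq_sub {α M : Type*} [Fintype α] [DecidableEq α] [AddCommGroup M]
    (f : α × α → M) :
    ∑ p ∈ univ.offDiag, f p = ∑ i, ∑ j, f (i, j) - ∑ i, f (i, i) := by
  rw [← sum_product (f := f), ← diag_union_offDiag,
    sum_union (disjoint_diag_offDiag _), sum_diag, add_sub_cancel_left]

namespace Matrix

variable {m n 𝕜 : Type*} [Fintype m] [Fintype n] [RCLike 𝕜]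

theorem sum_sq_norm_eq_re_trace_conjTranspose_mul_self (A : Matrix m n 𝕜) :
    ∑ i, ∑ j, ‖A i j‖ ^ 2 = RCLike.re (Aᴴ * A).trace := by
  simp only [trace, diag_apply, mul_apply, conjTranspose_apply, map_sum, RCLike.star_def,
    RCLike.conj_mul, ← RCLike.ofReal_pow, RCLike.ofReal_re]
  exact sum_comm

theorem mul_diag_mul_conjTranspose_apply_self {F D : Matrix n n 𝕜} (hD : D.IsDiag) {i : n}
    {c : ℝ} (hF : ∀ k, ‖F i k‖ ^ 2 = c) :
    (F * D * Fᴴ) i i = c * D.trace := by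
  simp only [mul_apply, conjTranspose_apply, trace, diag_apply, mul_sum]
  refine sum_congr rfl fun k _ => ?_
  rw [sum_mul, sum_eq_single k (fun j _ hjk => by rw [hD hjk, mul_zero, zero_mul]) (by simp),
    mul_right_comm, RCLike.star_def, RCLike.mul_conj, ← RCLike.ofReal_pow, hF]

theorem card_mul_norm_sq_trace_div_card_le (A : Matrix n n 𝕜) :
    Fintype.card n * ‖A.trace / Fintype.card n‖ ^ 2 ≤ ∑ i, ‖A i i‖ ^ 2 := by
  have htrace : ‖A.trace‖ ≤ ∑ i, ‖A i i‖ := norm_sum_le _ _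
  have hcs : (∑ i, ‖A i i‖) ^ 2 ≤ Fintype.card n * ∑ i, ‖A i i‖ ^ 2 := by
    simpa using sq_sum_le_card_mul_sum_sq (s := univ) (f := fun i => ‖A i i‖)
  obtain hn | hn := (Fintype.card n).eq_zero_or_pos
  · rw [hn, Nat.cast_zero, zero_mul]
    positivity
  calc (Fintype.card n : ℝ) * ‖A.trace / Fintype.card n‖ ^ 2
      = ‖A.trace‖ ^ 2 / Fintype.card n := by
        rw [norm_div, RCLike.norm_natCast]
        field_simp
    _ ≤ Fintype.card n * (∑ i, ‖A i i‖ ^ 2) / Fintype.card n := by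
        gcongr
        exact (pow_le_pow_left₀ (norm_nonneg _) htrace 2).trans hcs
    _ = ∑ i, ‖A i i‖ ^ 2 := by field_simp

variable [DecidableEq n]

theorem trace_unitary_conj {W : Matrix n n 𝕜} (hW : W ∈ unitaryGroup n 𝕜) (A : Matrix n n 𝕜) :
    (W * A * Wᴴ).trace = A.trace := by
  rw [trace_mul_comm, ← Matrix.mul_assoc, ← star_eq_conjTranspose,
    Unitary.star_mul_self_of_mem hW, Matrix.one_mul]

theorem sum_sq_norm_unitary_conj {W : Matrix n n 𝕜} (hW : W ∈ unitaryGroup n 𝕜)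
    (A : Matrix n n 𝕜) :
    ∑ i, ∑ j, ‖(W * A * Wᴴ) i j‖ ^ 2 = ∑ i, ∑ j, ‖A i j‖ ^ 2 := by
  have hWW : Wᴴ * W = 1 := Unitary.star_mul_self_of_mem hW
  have : (W * A * Wᴴ)ᴴ * (W * A * Wᴴ) = W * (Aᴴ * A) * Wᴴ := by
    simp only [conjTranspose_mul, conjTranspose_conjTranspose, Matrix.mul_assoc]
    rw [← Matrix.mul_assoc Wᴴ W, hWW, Matrix.one_mul]
  rw [sum_sq_norm_eq_re_trace_conjTranspose_mul_self, this, trace_unitary_conj hW,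
    sum_sq_norm_eq_re_trace_conjTranspose_mul_self]

end Matrix

theorem offdiag_weight_max_at_hadamard (N : ℕ)
    (H U F : Matrix (Fin N) (Fin N) ℂ)
    (hU : U ∈ Matrix.unitaryGroup (Fin N) ℂ)
    (hUdiag : (U * H * Uᴴ).IsDiag)
    (hF : F ∈ Matrix.unitaryGroup (Fin N) ℂ)
    (hFmod : ∀ j k, ‖F j k‖ = 1 / Real.sqrt N) :
    ∀ V ∈ Matrix.unitaryGroup (Fin N) ℂ,
      ∑ p ∈ Finset.univ.offDiag, ‖(V * H * Vᴴ) p.1 p.2‖ ^ 2 ≤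
        ∑ p ∈ Finset.univ.offDiag, ‖((F * U) * H * (F * U)ᴴ) p.1 p.2‖ ^ 2 := by
  intro V hV
  have hFU_diag (i : Fin N) : ((F * U) * H * (F * U)ᴴ) i i = H.trace / N := by
    have hFU : (F * U) * H * (F * U)ᴴ = F * (U * H * Uᴴ) * Fᴴ := by
      simp only [conjTranspose_mul, Matrix.mul_assoc]
    have hrow (k : Fin N) : ‖F i k‖ ^ 2 = (N : ℝ)⁻¹ := by
      rw [hFmod, one_div, inv_pow, Real.sq_sqrt N.cast_nonneg]
    rw [hFU, mul_diag_mul_conjTranspose_apply_self hUdiag hrow, trace_unitary_conj hU]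
    push_cast
    ring
  have hV_diag := card_mul_norm_sq_trace_div_card_le (V * H * Vᴴ)
  rw [trace_unitary_conj hV, Fintype.card_fin] at hV_diag
  simp only [sum_offDiag_univ_eq_sub, sum_sq_norm_unitary_conj hV,
    sum_sq_norm_unitary_conj (mul_mem hF hU), hFU_diag, sum_const, card_univ,
    Fintype.card_fin, nsmul_eq_mul]
  linarith
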